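/- arXiv:2505.23819 — 6 statements merged into one kernel-verified Lean document; each statement's English description precedes it below -/
import Mathlib

section
/- For all natural numbers p, q, v and all natural numbers i, j, the mma swizzle function satisfies swz p q v i j = ((((i / 2^p) % 2^q) * 2^v) ^^^ j); that is, swizzling the coordinate pair (i, j) equals XOR-ing into j a constant that depends only on i. -/
/-!
Multiplying by `2 ^ v` is a left shift by `v` bits, so it distributes over XOR; and since the
high part `j / 2 ^ v * 2 ^ v` and the low part `j % 2 ^ v` occupy disjoint bits, their XOR is
their sum, which is `j`.
-/

/-- The mma swizzle function: `swz p q v i j` is the shared-memory offset assigned to the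
tensor element at coordinates `(i, j)`, where `p, q, v` are the base-2 logarithms of the
swizzling parameters `per_phase`, `max_phase`, `vec`. -/
def swz (p q v i j : ℕ) : ℕ :=
  ((((i / 2 ^ p) % 2 ^ q) ^^^ (j / 2 ^ v)) * 2 ^ v) ^^^ (j % 2 ^ v)

namespace Nat

theorem xor_mul_two_pow (a b n : ℕ) : (a ^^^ b) * 2 ^ n = a * 2 ^ n ^^^ b * 2 ^ n := by
  simpa only [shiftLeft_eq] using shiftLeft_xor_distrib (a := a) (b := b) (i := n)

theorem mul_two_pow_xor_eq_add_of_lt {b n : ℕ} (hb : b < 2 ^ n) (a : ℕ) :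
    a * 2 ^ n ^^^ b = a * 2 ^ n + b := by
  apply eq_of_testBit_eq
  intro k
  rw [testBit_xor, ← shiftLeft_eq, shiftLeft_add_eq_or_of_lt hb, testBit_or]
  by_cases hk : k < n
  · simp [not_le.mpr hk]
  · have hbk : b.testBit k = false :=
      testBit_lt_two_pow (hb.trans_le (Nat.pow_le_pow_right two_pos (not_lt.mp hk)))
    simp [hbk]

theorem div_two_pow_mul_two_pow_xor_mod_two_pow (j n : ℕ) :
    j / 2 ^ n * 2 ^ n ^^^ j % 2 ^ n = j := by
  rw [mul_two_pow_xor_eq_add_of_lt (mod_lt j (Nat.two_pow_pos n)), div_add_mod']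

theorem xor_div_two_pow_mul_two_pow_xor_mod_two_pow (c j n : ℕ) :
    (c ^^^ j / 2 ^ n) * 2 ^ n ^^^ j % 2 ^ n = c * 2 ^ n ^^^ j := by
  rw [xor_mul_two_pow, Nat.xor_assoc, div_two_pow_mul_two_pow_xor_mod_two_pow]

end Nat

/-- Swizzling the coordinate pair `(i, j)` equals XOR-ing into `j` a constant that depends
only on `i`. -/
theorem swz_eq_xor_const (p q v i j : ℕ) :
    swz p q v i j = ((((i / 2 ^ p) % 2 ^ q) * 2 ^ v) ^^^ j) :=
  Nat.xor_div_two_pow_mul_two_pow_xor_mod_two_pow _ j v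
end

section
/- The mma swizzle function is linear over F₂ in the bits of its coordinate arguments: for all natural numbers p, q, v and all i₁, i₂, j₁, j₂ : ℕ, swz p q v (i₁ ^^^ i₂) (j₁ ^^^ j₂) = (swz p q v i₁ j₁) ^^^ (swz p q v i₂ j₂). -/
theorem Nat.xor_mul_two_pow_s1 (a b n : ℕ) : (a ^^^ b) * 2 ^ n = a * 2 ^ n ^^^ b * 2 ^ n := by
  simp only [← Nat.shiftLeft_eq, Nat.shiftLeft_xor_distrib]

/-- The mma swizzle function is linear over F₂ in the bits of its coordinate arguments. -/
theorem swz_xor_linear (p q v : ℕ) (i₁ i₂ j₁ j₂ : ℕ) :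
    swz p q v (i₁ ^^^ i₂) (j₁ ^^^ j₂) = (swz p q v i₁ j₁) ^^^ (swz p q v i₂ j₂) := by
  simp only [swz, Nat.xor_div_two_pow, Nat.xor_mod_two_pow, Nat.xor_mul_two_pow_s1]
  ac_rfl
end

section
/- MMA swizzled layouts are invertible mappings: for natural numbers p, q, v, m, n with q + v ≤ n, the map on Fin (2^m) × Fin (2^n) sending (i, j) to (i, swz p q v i j) (well-defined since swz p q v i j < 2^n whenever j < 2^n) is a bijection; indeed it is an involution, i.e., applying it twice gives the identity. -/
lemma Nat.xor_div_two_pow_mul_xor_mod (a j v : ℕ) :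
    ((a ^^^ j / 2 ^ v) * 2 ^ v) ^^^ (j % 2 ^ v) = j ^^^ (a * 2 ^ v) := by
  refine Nat.eq_of_testBit_eq fun k => ?_
  simp only [Nat.testBit_xor, Nat.testBit_mul_two_pow, Nat.testBit_div_two_pow,
    Nat.testBit_mod_two_pow]
  by_cases hk : v ≤ k
  · simp [hk, Nat.sub_add_cancel hk, Nat.not_lt.mpr hk, Bool.xor_comm]
  · simp [hk, Nat.not_le.mp hk]

lemma swz_eq_xor (p q v i j : ℕ) : swz p q v i j = j ^^^ ((i / 2 ^ p) % 2 ^ q * 2 ^ v) :=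
  Nat.xor_div_two_pow_mul_xor_mod _ _ _

lemma swz_swz (p q v i j : ℕ) : swz p q v i (swz p q v i j) = j := by
  rw [swz_eq_xor, swz_eq_xor, Nat.xor_assoc, Nat.xor_self, Nat.xor_zero]

lemma swz_lt_two_pow {p q v n : ℕ} (h : q + v ≤ n) (i : ℕ) {j : ℕ} (hj : j < 2 ^ n) :
    swz p q v i j < 2 ^ n := by
  have hmask : (i / 2 ^ p) % 2 ^ q * 2 ^ v < 2 ^ n :=
    calc (i / 2 ^ p) % 2 ^ q * 2 ^ v < 2 ^ q * 2 ^ v :=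
          Nat.mul_lt_mul_of_pos_right (Nat.mod_lt _ (Nat.two_pow_pos q)) (Nat.two_pow_pos v)
      _ = 2 ^ (q + v) := (Nat.pow_add 2 q v).symm
      _ ≤ 2 ^ n := Nat.pow_le_pow_right two_pos h
  rw [swz_eq_xor]
  exact Nat.xor_lt_two_pow hj hmask

def swzLayout (p q v m n : ℕ) (h : q + v ≤ n) (x : Fin (2 ^ m) × Fin (2 ^ n)) :
    Fin (2 ^ m) × Fin (2 ^ n) :=
  (x.1, ⟨swz p q v x.1 x.2, swz_lt_two_pow h x.1 x.2.isLt⟩)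

lemma swzLayout_involutive (p q v m n : ℕ) (h : q + v ≤ n) :
    Function.Involutive (swzLayout p q v m n h) :=
  fun x => Prod.ext rfl (Fin.ext (swz_swz p q v x.1 x.2))

/-- MMA swizzled layouts are invertible mappings: the map on `Fin (2 ^ m) × Fin (2^n)`
sending `(i, j)` to `(i, swz p q v i j)` is well defined (the swizzled column stays below
`2 ^ n`), is an involution, and hence a bijection. -/
theorem swz_layout_bijective (p q v m n : ℕ) (h : q + v ≤ n) :
    ∃ f : Fin (2 ^ m) × Fin (2 ^ n) → Fin (2 ^ m) × Fin (2 ^ n),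
      (∀ x : Fin (2 ^ m) × Fin (2 ^ n),
        (f x).1 = x.1 ∧ ((f x).2 : ℕ) = swz p q v (x.1 : ℕ) (x.2 : ℕ)) ∧
      f ∘ f = id ∧ Function.Bijective f :=
  ⟨swzLayout p q v m n h, fun _ => ⟨rfl, rfl⟩,
    (swzLayout_involutive p q v m n h).comp_self, (swzLayout_involutive p q v m n h).bijective⟩
end

section
/- Swizzling preserves vectorized (contiguous low-bit) positions: for all natural numbers p, q, v, i, j, one has (swz p q v i j) % 2^v = j % 2^v, so elements that are contiguous within a vector of length 2^v remain contiguous after swizzling. -/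
theorem Nat.mul_two_pow_xor_mod_two_pow (a b v : ℕ) :
    (a * 2 ^ v ^^^ b) % 2 ^ v = b % 2 ^ v := by
  rw [Nat.xor_mod_two_pow, Nat.mul_mod_left, Nat.zero_xor]

/-- Swizzling preserves vectorized (contiguous low-bit) positions: the residue modulo
`2 ^ v` is unchanged by swizzling. -/
theorem swz_mod_vec (p q v i j : ℕ) :
    (swz p q v i j) % 2 ^ v = j % 2 ^ v := by
  rw [swz, Nat.mul_two_pow_xor_mod_two_pow, Nat.mod_mod]
end

section
/- Existence part of the abstract swizzling lemma: let d be a natural number and let U, V be submodules (subspaces) of the F₂ vector space V_d := Fin d → ZMod 2. Then there exists a submodule W of V_d with Module.finrank (ZMod 2) W = d - max (Module.finrank (ZMod 2) U) (Module.finrank (ZMod 2) V), such that Disjoint W U and Disjoint W V (equivalently, W has trivial intersection with the set union U ∪ V). -/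
/-!
Build `W` one vector at a time. While `dim W + max (dim U) (dim V) < d`, both `W ⊔ U` and
`W ⊔ V` are proper subspaces, and no group is the union of two proper subgroups, so some `x`
lies outside both; adjoining `x` to `W` raises its dimension by one and, by modularity of the
subspace lattice, keeps it disjoint from `U` and from `V`. Two is the most subspaces this
argument can avoid over `F₂`: three proper subspaces of `F₂²` already cover it.
-/

open Module

namespace Submodule

variable {K M : Type*}

theorem exists_notMem_notMem_of_ne_top [Ring K] [AddCommGroup M] [Module K M]
    {A B : Submodule K M} (hA : A ≠ ⊤) (hB : B ≠ ⊤) : ∃ x, x ∉ A ∧ x ∉ B := by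
  by_contra! h
  have hcover : ((⊤ : Submodule K M) : Set M) ⊆ A ∪ B :=
    fun x _ => (em (x ∈ A)).imp_right (h x)
  rcases AddSubgroupClass.subset_union.mp hcover with hA' | hB'
  · exact hA (top_le_iff.mp hA')
  · exact hB (top_le_iff.mp hB')

variable [DivisionRing K] [AddCommGroup M] [Module K M]

theorem disjoint_sup_span_singleton {W U : Submodule K M} {x : M} (hWU : Disjoint W U)
    (hx : x ∉ W ⊔ U) : Disjoint (W ⊔ K ∙ x) U := by
  rw [sup_comm]
  exact hWU.disjoint_sup_left_of_disjoint_sup_right (disjoint_span_singleton_of_notMem hx).symm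

variable [Module.Finite K M]

theorem sup_ne_top_of_finrank_add_lt {s t : Submodule K M}
    (h : finrank K s + finrank K t < finrank K M) : s ⊔ t ≠ ⊤ := by
  intro hst
  have hle := finrank_add_le_finrank_add_finrank s t
  rw [hst, finrank_top] at hle
  omega

theorem exists_finrank_eq_disjoint_disjoint (U V : Submodule K M) :
    ∀ {k : ℕ}, finrank K U + k ≤ finrank K M → finrank K V + k ≤ finrank K M →
      ∃ W : Submodule K M, finrank K W = k ∧ Disjoint W U ∧ Disjoint W V
  | 0, _, _ => ⟨⊥, finrank_bot K M, disjoint_bot_left, disjoint_bot_left⟩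
  | k + 1, hU, hV => by
    obtain ⟨W, hW, hWU, hWV⟩ :=
      exists_finrank_eq_disjoint_disjoint U V (k := k) (by omega) (by omega)
    obtain ⟨x, hxU, hxV⟩ := exists_notMem_notMem_of_ne_top
      (sup_ne_top_of_finrank_add_lt (s := W) (t := U) (by omega))
      (sup_ne_top_of_finrank_add_lt (s := W) (t := V) (by omega))
    refine ⟨W ⊔ K ∙ x, ?_, disjoint_sup_span_singleton hWU hxU,
      disjoint_sup_span_singleton hWV hxV⟩
    rw [finrank_sup_span_singleton fun hxW => hxU (mem_sup_left hxW), hW]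

end Submodule

/-- Existence part of the abstract swizzling lemma: for submodules `U, V` of the `F₂`
vector space `Fin d → ZMod 2`, there is a submodule `W` of dimension
`d - max (dim U) (dim V)` with trivial intersection with both `U` and `V`. -/
theorem exists_compl_of_union (d : ℕ) (U V : Submodule (ZMod 2) (Fin d → ZMod 2)) :
    ∃ W : Submodule (ZMod 2) (Fin d → ZMod 2),
      Module.finrank (ZMod 2) W =
        d - max (Module.finrank (ZMod 2) U) (Module.finrank (ZMod 2) V) ∧
      Disjoint W U ∧ Disjoint W V := by
  have hd : finrank (ZMod 2) (Fin d → ZMod 2) = d := finrank_fin_fun (ZMod 2)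
  have hU := U.finrank_le
  have hV := V.finrank_le
  exact U.exists_finrank_eq_disjoint_disjoint V (by omega) (by omega)
end

section
/- Constructive step of the abstract swizzling lemma: let d be a natural number and let I, E, F, C be submodules of the F₂ vector space V_d := Fin d → ZMod 2 that are independent (as a family of submodules) with I ⊔ E ⊔ F ⊔ C = ⊤. Set U := I ⊔ E and V := I ⊔ F. Let φ : E →ₗ[ZMod 2] F be an injective linear map, and let G be the submodule of V_d equal to the range of the linear map from E to V_d sending e to (e : V_d) + (φ e : V_d). Then Disjoint (G ⊔ C) U and Disjoint (G ⊔ C) V, and Module.finrank (ZMod 2) (G ⊔ C) = Module.finrank (ZMod 2) E + Module.finrank (ZMod 2) C; consequently, if Module.finrank (ZMod 2) E ≤ Module.finrank (ZMod 2) F, then Module.finrank (ZMod 2) (G ⊔ C) = d - Module.finrank (ZMod 2) V. -/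
/-!
The map `e ↦ e + φ e` embeds `E` as a graph `G ≤ E ⊔ F`. Since `E ⊓ F = ⊥`, the graph meets `F`
trivially, and it meets `E` trivially because `φ` is injective. Modularity of the lattice of
submodules, together with the independence of `I, E, F, C`, upgrades these to the disjointness of
`G ⊔ C` from `I ⊔ E` and from `I ⊔ F`. Moreover `E ≤ G ⊔ F`, so `G ⊔ C` is a complement of
`I ⊔ F`, which gives its dimension.
-/

theorem iSupIndep.disjoint_fin_four {α : Type*} [CompleteLattice α] {a b c d : α}
    (h : iSupIndep ![a, b, c, d]) :
    Disjoint b c ∧ Disjoint a (b ⊔ c) ∧ Disjoint (a ⊔ b ⊔ c) d := by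
  have hle : ∀ i j : Fin 4, j ≠ i → ![a, b, c, d] j ≤ ⨆ k ≠ i, ![a, b, c, d] k :=
    fun i j hj => le_iSup₂_of_le j hj le_rfl
  refine ⟨(h 1).mono_right (hle 1 2 (by decide)), (h 0).mono_right ?_, (h 3).symm.mono_left ?_⟩
  · exact sup_le (hle 0 1 (by decide)) (hle 0 2 (by decide))
  · exact sup_le (sup_le (hle 3 0 (by decide)) (hle 3 1 (by decide))) (hle 3 2 (by decide))

theorem disjoint_sup_sup_of_le {α : Type*} [Lattice α] [OrderBot α] [IsModularLattice α]
    {a b c x y : α} (hxy : x ≤ y) (hby : b ≤ y) (hay : Disjoint a y) (hc : Disjoint (a ⊔ y) c)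
    (hbx : Disjoint b x) : Disjoint (b ⊔ c) (a ⊔ x) := by
  have hax : Disjoint (a ⊔ x) b :=
    hbx.symm.disjoint_sup_left_of_disjoint_sup_right (hay.mono_right (sup_le hxy hby))
  exact (hax.disjoint_sup_right_of_disjoint_sup_left
    (hc.mono_left (sup_le (sup_le le_sup_left (hxy.trans le_sup_right))
      (hby.trans le_sup_right)))).symm

theorem Submodule.finrank_sup_of_disjoint {K V : Type*} [DivisionRing K] [AddCommGroup V]
    [Module K V] [FiniteDimensional K V] {A B : Submodule K V} (h : Disjoint A B) :
    Module.finrank K ↥(A ⊔ B) = Module.finrank K A + Module.finrank K B := by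
  rw [← Submodule.finrank_sup_add_finrank_inf_eq, h.eq_bot, finrank_bot, add_zero]

namespace Submodule

variable {R M : Type*} [Ring R] [AddCommGroup M] [Module R M] {E F : Submodule R M}

def embeddedGraph (φ : E →ₗ[R] F) : Submodule R M :=
  LinearMap.range (E.subtype + F.subtype ∘ₗ φ)

variable (φ : E →ₗ[R] F)

theorem embeddedGraph_le_sup : embeddedGraph φ ≤ E ⊔ F := by
  rintro _ ⟨e, rfl⟩
  exact add_mem (mem_sup_left e.2) (mem_sup_right (φ e).2)

theorem le_embeddedGraph_sup : E ≤ embeddedGraph φ ⊔ F := fun e he => by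
  rw [← add_sub_cancel_right e (φ ⟨e, he⟩ : M)]
  exact sub_mem (mem_sup_left ⟨⟨e, he⟩, rfl⟩) (mem_sup_right (φ ⟨e, he⟩).2)

variable {φ}

theorem disjoint_embeddedGraph_right (hEF : Disjoint E F) : Disjoint (embeddedGraph φ) F := by
  rw [disjoint_def]
  rintro _ ⟨e, rfl⟩ hf
  have he : e = 0 := Subtype.ext <| disjoint_def.mp hEF e e.2 <| by
    simpa using sub_mem hf (φ e).2
  simp [he]

theorem disjoint_embeddedGraph_left (hEF : Disjoint E F) (hφ : Function.Injective φ) :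
    Disjoint (embeddedGraph φ) E := by
  rw [disjoint_def]
  rintro _ ⟨e, rfl⟩ he
  have hφe : φ e = 0 :=
    Subtype.ext <| disjoint_def.mp hEF _ (by simpa using sub_mem he e.2) (φ e).2
  simp [hφ (hφe.trans (map_zero φ).symm)]

theorem finrank_embeddedGraph (hEF : Disjoint E F) :
    Module.finrank R (embeddedGraph φ) = Module.finrank R E := by
  refine LinearMap.finrank_range_of_inj <| (injective_iff_map_eq_zero _).mpr fun e h => ?_
  have he : (e : M) = -(φ e : M) := eq_neg_of_add_eq_zero_left h
  exact Subtype.ext <| disjoint_def.mp hEF _ e.2 (he ▸ neg_mem (φ e).2)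

end Submodule

open Submodule in
/-- Constructive step of the abstract swizzling lemma: given an independent four-way
decomposition `I ⊔ E ⊔ F ⊔ C = ⊤` of `Fin d → ZMod 2`, with `U = I ⊔ E`, `V = I ⊔ F`,
an injective linear map `φ : E →ₗ F`, and `G` the range of `e ↦ (e : V_d) + (φ e : V_d)`,
the submodule `G ⊔ C` is disjoint from `U` and from `V`, has dimension
`dim E + dim C`, and hence dimension `d - dim V` whenever `dim E ≤ dim F`. -/
theorem swizzling_constructive_step (d : ℕ)
    (I E F C : Submodule (ZMod 2) (Fin d → ZMod 2))
    (hind : iSupIndep ![I, E, F, C])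
    (htop : I ⊔ E ⊔ F ⊔ C = ⊤)
    (φ : E →ₗ[ZMod 2] F) (hφ : Function.Injective φ)
    (G : Submodule (ZMod 2) (Fin d → ZMod 2))
    (hG : G = LinearMap.range (E.subtype + F.subtype.comp φ)) :
    Disjoint (G ⊔ C) (I ⊔ E) ∧ Disjoint (G ⊔ C) (I ⊔ F) ∧
    Module.finrank (ZMod 2) ↥(G ⊔ C) =
      Module.finrank (ZMod 2) E + Module.finrank (ZMod 2) C ∧
    (Module.finrank (ZMod 2) E ≤ Module.finrank (ZMod 2) F →
      Module.finrank (ZMod 2) ↥(G ⊔ C) = d - Module.finrank (ZMod 2) ↥(I ⊔ F)) := by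
  replace hG : G = embeddedGraph φ := hG
  obtain ⟨hEF, hI, hC⟩ := hind.disjoint_fin_four
  rw [sup_assoc] at hC
  have hGEF : G ≤ E ⊔ F := hG ▸ embeddedGraph_le_sup φ
  have hGU : Disjoint (G ⊔ C) (I ⊔ E) :=
    disjoint_sup_sup_of_le le_sup_left hGEF hI hC (hG ▸ disjoint_embeddedGraph_left hEF hφ)
  have hGV : Disjoint (G ⊔ C) (I ⊔ F) :=
    disjoint_sup_sup_of_le le_sup_right hGEF hI hC (hG ▸ disjoint_embeddedGraph_right hEF)
  have hGV_codisjoint : Codisjoint (G ⊔ C) (I ⊔ F) := by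
    have hE : E ≤ G ⊔ C ⊔ (I ⊔ F) :=
      (hG ▸ le_embeddedGraph_sup φ).trans (sup_le_sup le_sup_left le_sup_right)
    rw [codisjoint_iff, eq_top_iff, ← htop]
    exact sup_le (sup_le (sup_le (le_sup_of_le_right le_sup_left) hE)
      (le_sup_of_le_right le_sup_right)) (le_sup_of_le_left le_sup_right)
  have hrank : Module.finrank (ZMod 2) ↥(G ⊔ C) =
      Module.finrank (ZMod 2) E + Module.finrank (ZMod 2) C := by
    rw [finrank_sup_of_disjoint (hC.mono_left (hGEF.trans le_sup_right)), hG,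
      finrank_embeddedGraph hEF]
  refine ⟨hGU, hGV, hrank, fun _ => ?_⟩
  have hdim := finrank_add_eq_of_isCompl (IsCompl.mk hGV hGV_codisjoint)
  rw [Module.finrank_fin_fun (ZMod 2)] at hdim
  omega
end
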